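/- If x is a global minimizer of f_G(y) = y^T(I + A_G)y over Δ_n and the support S of x contains an edge {i,j} of G, then {i,j} is a critical edge of G, i.e., α(G \ {i,j}) = α(G) + 1. -/

import Mathlib

open Matrix Finset
open scoped Classical

def IsStable {n : ℕ} (G : SimpleGraph (Fin n)) (S : Finset (Fin n)) : Prop :=
  ∀ i ∈ S, ∀ j ∈ S, ¬ G.Adj i j

noncomputable def alpha {n : ℕ} (G : SimpleGraph (Fin n)) : ℕ :=
  sSup {k | ∃ S : Finset (Fin n), IsStable G S ∧ S.card = k}

noncomputable def indic {n : ℕ} (S : Finset (Fin n)) : Fin n → ℝ :=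
  fun i => if i ∈ S then 1 else 0

noncomputable def qform {n : ℕ} (M : Matrix (Fin n) (Fin n) ℝ) (x : Fin n → ℝ) : ℝ :=
  x ⬝ᵥ M.mulVec x

noncomputable def fG {n : ℕ} (G : SimpleGraph (Fin n)) (x : Fin n → ℝ) : ℝ :=
  qform (1 + G.adjMatrix ℝ) x

noncomputable def globMin {n : ℕ} (f : (Fin n → ℝ) → ℝ) : Set (Fin n → ℝ) :=
  {x | x ∈ stdSimplex ℝ (Fin n) ∧ ∀ y ∈ stdSimplex ℝ (Fin n), f x ≤ f y}

/-!
By Motzkin–Straus, the minimum of `f_G` over the simplex is `1 / α(G)`. For the lower bound: along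
`e_a - e_b` with `ab` an edge, `f_G` is affine (its quadratic coefficient is `1 + 1 - 1 - 1 = 0`), so
mass can be pushed from one endpoint to the other without increasing `f_G` until the support is
stable; there `f_G x = ∑ x_a² ≥ 1 / |supp x| ≥ 1 / α(G)` by Cauchy–Schwarz. The uniform vector on a
maximum stable set attains the bound.

Deleting `e = ij` gives `f_G = f_{G∖e} + 2 x_i x_j`. If `α(G∖e) = α(G)`, a minimiser `x` with
`x_i x_j > 0` would satisfy `1 / α(G) ≤ f_{G∖e}(x) < f_G(x) = 1 / α(G)`. Since deleting an edge
raises `α` by at most one, `α(G∖e) = α(G) + 1`.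
-/

open SimpleGraph

variable {n : ℕ}

noncomputable def supportFinset (x : Fin n → ℝ) : Finset (Fin n) := {a | x a ≠ 0}

@[simp] lemma mem_supportFinset {x : Fin n → ℝ} {a : Fin n} : a ∈ supportFinset x ↔ x a ≠ 0 := by
  simp [supportFinset]

section Stability

variable {G H : SimpleGraph (Fin n)} {S T : Finset (Fin n)}

lemma IsStable.subset (hS : IsStable G S) (hTS : T ⊆ S) : IsStable G T :=
  fun a ha b hb => hS a (hTS ha) b (hTS hb)

lemma IsStable.mono (hS : IsStable G S) (hHG : H ≤ G) : IsStable H S :=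
  fun a ha b hb hab => hS a ha b hb (hHG hab)

lemma bddAbove_card_isStable (G : SimpleGraph (Fin n)) :
    BddAbove {k | ∃ S : Finset (Fin n), IsStable G S ∧ S.card = k} := by
  refine ⟨n, ?_⟩
  rintro _ ⟨S, -, rfl⟩
  simpa using S.card_le_univ

lemma IsStable.card_le_alpha (hS : IsStable G S) : S.card ≤ alpha G :=
  le_csSup (bddAbove_card_isStable G) ⟨S, hS, rfl⟩

lemma exists_isStable_card_eq_alpha (G : SimpleGraph (Fin n)) :
    ∃ S : Finset (Fin n), IsStable G S ∧ S.card = alpha G :=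
  Nat.sSup_mem (s := {k | ∃ S : Finset (Fin n), IsStable G S ∧ S.card = k})
    ⟨0, ∅, by simp [IsStable]⟩ (bddAbove_card_isStable G)

lemma alpha_pos (G : SimpleGraph (Fin n)) (i : Fin n) : 0 < alpha G :=
  (IsStable.card_le_alpha (S := {i}) (by simp [IsStable])).trans_lt' (by simp)

lemma alpha_anti (hHG : H ≤ G) : alpha G ≤ alpha H := by
  obtain ⟨S, hS, hcard⟩ := exists_isStable_card_eq_alpha G
  exact hcard ▸ (hS.mono hHG).card_le_alpha

lemma IsStable.erase_of_deleteEdges {i j : Fin n}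
    (hS : IsStable (G.deleteEdges {s(i, j)}) S) : IsStable G (S.erase i) := by
  intro a ha b hb hab
  have hedge : s(a, b) = s(i, j) := by
    by_contra hne
    exact hS a (mem_of_mem_erase ha) b (mem_of_mem_erase hb) (deleteEdges_adj.2 ⟨hab, hne⟩)
  rcases Sym2.eq_iff.1 hedge with ⟨rfl, -⟩ | ⟨-, rfl⟩
  · exact ne_of_mem_erase ha rfl
  · exact ne_of_mem_erase hb rfl

lemma alpha_deleteEdges_le_succ (G : SimpleGraph (Fin n)) (i j : Fin n) :
    alpha (G.deleteEdges {s(i, j)}) ≤ alpha G + 1 := by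
  obtain ⟨S, hS, hcard⟩ := exists_isStable_card_eq_alpha (G.deleteEdges {s(i, j)})
  have := hS.erase_of_deleteEdges.card_le_alpha
  have := S.pred_card_le_card_erase (a := i)
  omega

end Stability

section QuadraticForm

lemma qform_add_smul {M : Matrix (Fin n) (Fin n) ℝ} (hM : M.IsSymm) (x d : Fin n → ℝ) (t : ℝ) :
    qform M (x + t • d) = qform M x + 2 * t * (d ⬝ᵥ M *ᵥ x) + t ^ 2 * qform M d := by
  have hcomm : x ⬝ᵥ M *ᵥ d = d ⬝ᵥ M *ᵥ x := by
    rw [dotProduct_mulVec, dotProduct_comm, ← mulVec_transpose, hM.eq]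
  simp only [qform, mulVec_add, mulVec_smul, dotProduct_add, add_dotProduct, dotProduct_smul,
    smul_dotProduct, smul_eq_mul, hcomm]
  ring

lemma qform_single_sub_single (M : Matrix (Fin n) (Fin n) ℝ) (a b : Fin n) :
    qform M (Pi.single a 1 - Pi.single b 1) = M a a + M b b - M a b - M b a := by
  simp only [qform, mulVec_sub, mulVec_single, MulOpposite.op_one, one_smul, dotProduct_sub,
    sub_dotProduct, single_dotProduct, col_apply, one_mul]
  ring

variable (G : SimpleGraph (Fin n))

lemma fG_eq_sum_sq_add_sum_adj (x : Fin n → ℝ) :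
    fG G x = ∑ a, x a ^ 2 + ∑ a, ∑ b, if G.Adj a b then x a * x b else 0 := by
  simp only [fG, qform, add_mulVec, one_mulVec, dotProduct_add, dotProduct_mulVec_adjMatrix]
  simp [dotProduct, sq]

lemma fG_eq_sum_sq_of_isStable {x : Fin n → ℝ} (hx : IsStable G (supportFinset x)) :
    fG G x = ∑ a, x a ^ 2 := by
  rw [fG_eq_sum_sq_add_sum_adj, add_eq_left]
  refine sum_eq_zero fun a _ => sum_eq_zero fun b _ => ?_
  by_cases ha : x a = 0
  · simp [ha]
  by_cases hb : x b = 0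
  · simp [hb]
  simp [hx a (by simpa) b (by simpa)]

lemma fG_eq_fG_deleteEdges_add {i j : Fin n} (hij : G.Adj i j) (x : Fin n → ℝ) :
    fG G x = fG (G.deleteEdges {s(i, j)}) x + 2 * x i * x j := by
  have hsplit : ∀ a b, (if G.Adj a b then x a * x b else 0) =
      (if (G.deleteEdges {s(i, j)}).Adj a b then x a * x b else 0) +
        ((if a = i ∧ b = j then x a * x b else 0) + if a = j ∧ b = i then x a * x b else 0) := by
    intro a b
    by_cases h : s(a, b) = s(i, j)
    · rcases Sym2.eq_iff.1 h with ⟨rfl, rfl⟩ | ⟨rfl, rfl⟩ <;> simp [hij, hij.symm, hij.ne, hij.ne']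
    · have : ¬ (a = i ∧ b = j) ∧ ¬ (a = j ∧ b = i) := by simpa [Sym2.eq_iff] using h
      simp [h, this]
  -- `deleteEdges_adj` also identifies the two decidability instances on `(G.deleteEdges _).Adj`
  simp only [fG_eq_sum_sq_add_sum_adj, hsplit, sum_add_distrib, ite_and,
    sum_ite_irrel, sum_ite_eq', mem_univ, if_true, sum_const_zero, deleteEdges_adj]
  ring

lemma isSymm_one_add_adjMatrix : (1 + G.adjMatrix ℝ).IsSymm :=
  isSymm_one.add G.isSymm_adjMatrix

lemma fG_add_smul_single_sub_single {a b : Fin n} (hab : G.Adj a b) (x : Fin n → ℝ) (t : ℝ) :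
    fG G (x + t • (Pi.single a 1 - Pi.single b 1)) =
      fG G x + 2 * t * ((Pi.single a 1 - Pi.single b 1) ⬝ᵥ (1 + G.adjMatrix ℝ) *ᵥ x) := by
  rw [fG, qform_add_smul (isSymm_one_add_adjMatrix G), qform_single_sub_single]
  simp [hab, hab.symm, hab.ne, hab.ne', fG]

end QuadraticForm

section MotzkinStraus

variable (G : SimpleGraph (Fin n))

lemma inv_alpha_le_fG_of_isStable {x : Fin n → ℝ} (hx : x ∈ stdSimplex ℝ (Fin n))
    (hS : IsStable G (supportFinset x)) : (alpha G : ℝ)⁻¹ ≤ fG G x := by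
  set S := supportFinset x
  have hsum : ∑ a ∈ S, x a = 1 := by
    rw [← hx.2]
    exact sum_filter_ne_zero _
  have hcs : (1 : ℝ) ≤ S.card * ∑ a ∈ S, x a ^ 2 := by
    simpa [hsum] using sq_sum_le_card_mul_sum_sq (s := S) (f := x)
  have hSpos : (0 : ℝ) < S.card :=
    Nat.cast_pos.2 (card_pos.2 (nonempty_of_sum_ne_zero (hsum ▸ one_ne_zero)))
  calc (alpha G : ℝ)⁻¹ ≤ (S.card : ℝ)⁻¹ := by
        gcongr
        exact_mod_cast hS.card_le_alpha
    _ ≤ ∑ a ∈ S, x a ^ 2 := by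
        rwa [inv_le_iff_one_le_mul₀' hSpos]
    _ ≤ ∑ a, x a ^ 2 := sum_le_sum_of_subset_of_nonneg (subset_univ S) fun a _ _ => sq_nonneg _
    _ = fG G x := (fG_eq_sum_sq_of_isStable G hS).symm

lemma exists_support_ssubset_fG_le_of_slope_nonneg {x : Fin n → ℝ}
    (hx : x ∈ stdSimplex ℝ (Fin n)) {a b : Fin n} (hab : G.Adj a b) (ha : x a ≠ 0)
    (hb : x b ≠ 0) (hslope : 0 ≤ (Pi.single a 1 - Pi.single b 1) ⬝ᵥ (1 + G.adjMatrix ℝ) *ᵥ x) :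
    ∃ y ∈ stdSimplex ℝ (Fin n), supportFinset y ⊂ supportFinset x ∧ fG G y ≤ fG G x := by
  set y := x + (-x a) • (Pi.single a 1 - Pi.single b 1 : Fin n → ℝ)
  have hy : ∀ k, y k = if k = a then 0 else if k = b then x b + x a else x k := by
    intro k
    by_cases hka : k = a
    · subst hka; simp [y, hab.ne]
    by_cases hkb : k = b
    · subst hkb; simp [y, hab.ne']
    · simp [y, hka, hkb]
  refine ⟨y, ⟨fun k => ?_, ?_⟩, ?_, ?_⟩
  · rw [hy]
    split_ifs
    exacts [le_rfl, add_nonneg (hx.1 b) (hx.1 a), hx.1 k]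
  · simp [y, sum_add_distrib, ← mul_sum, hx.2]
  · refine (ssubset_iff_of_subset fun k hk => ?_).2 ⟨a, by simpa, by simp [hy]⟩
    rw [mem_supportFinset] at hk ⊢
    rw [hy] at hk
    split_ifs at hk with hka hkb
    exacts [hk.elim rfl, hkb ▸ hb, hk]
  · rw [fG_add_smul_single_sub_single G hab]
    nlinarith [hx.1 a]

lemma exists_support_ssubset_fG_le {x : Fin n → ℝ} (hx : x ∈ stdSimplex ℝ (Fin n))
    (hS : ¬ IsStable G (supportFinset x)) :
    ∃ y ∈ stdSimplex ℝ (Fin n), supportFinset y ⊂ supportFinset x ∧ fG G y ≤ fG G x := by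
  simp only [IsStable, mem_supportFinset, not_forall, not_not] at hS
  obtain ⟨a, ha, b, hb, hab⟩ := hS
  rcases le_total 0 ((Pi.single a 1 - Pi.single b 1) ⬝ᵥ (1 + G.adjMatrix ℝ) *ᵥ x) with h | h
  · exact exists_support_ssubset_fG_le_of_slope_nonneg G hx hab ha hb h
  · refine exists_support_ssubset_fG_le_of_slope_nonneg G hx hab.symm hb ha ?_
    rwa [← neg_sub, neg_dotProduct, neg_nonneg]

theorem inv_alpha_le_fG {x : Fin n → ℝ} (hx : x ∈ stdSimplex ℝ (Fin n)) :
    (alpha G : ℝ)⁻¹ ≤ fG G x := by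
  induction hk : (supportFinset x).card using Nat.strong_induction_on generalizing x with
  | _ k ih =>
    by_cases hS : IsStable G (supportFinset x)
    · exact inv_alpha_le_fG_of_isStable G hx hS
    obtain ⟨y, hy, hsub, hle⟩ := exists_support_ssubset_fG_le G hx hS
    exact (ih _ (hk ▸ card_lt_card hsub) hy rfl).trans hle

theorem exists_mem_stdSimplex_fG_eq_inv_alpha (i : Fin n) :
    ∃ z ∈ stdSimplex ℝ (Fin n), fG G z = (alpha G : ℝ)⁻¹ := by
  obtain ⟨S, hS, hcard⟩ := exists_isStable_card_eq_alpha G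
  have hα : (alpha G : ℝ) ≠ 0 := by exact_mod_cast (alpha_pos G i).ne'
  set z := (alpha G : ℝ)⁻¹ • indic S
  have hsupp : supportFinset z ⊆ S := fun k hk => by
    by_contra hkS
    simp [z, indic, hkS] at hk
  refine ⟨z, ⟨fun k => ?_, ?_⟩, ?_⟩
  · simp only [z, indic, Pi.smul_apply, smul_eq_mul]
    positivity
  · simp [z, indic, hcard, hα]
  · rw [fG_eq_sum_sq_of_isStable G (hS.subset hsupp)]
    simp only [z, indic, Pi.smul_apply, smul_eq_mul, mul_ite, mul_one, mul_zero, ite_pow,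
      zero_pow two_ne_zero, sum_ite_mem, univ_inter, sum_const, hcard, nsmul_eq_mul]
    field_simp

end MotzkinStraus

theorem stmt_6 (n : ℕ) (G : SimpleGraph (Fin n)) (x : Fin n → ℝ)
    (hmin : x ∈ globMin (fG G)) (i j : Fin n) (hadj : G.Adj i j)
    (hxi : x i ≠ 0) (hxj : x j ≠ 0) :
    alpha (G.deleteEdges {s(i, j)}) = alpha G + 1 := by
  obtain ⟨hx, hxmin⟩ := hmin
  have hge : alpha G ≤ alpha (G.deleteEdges {s(i, j)}) := alpha_anti (G.deleteEdges_le _)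
  have hle := alpha_deleteEdges_le_succ G i j
  suffices alpha (G.deleteEdges {s(i, j)}) ≠ alpha G by omega
  intro heq
  have hlower : (alpha G : ℝ)⁻¹ ≤ fG (G.deleteEdges {s(i, j)}) x :=
    heq ▸ inv_alpha_le_fG _ hx
  obtain ⟨z, hz, hfz⟩ := exists_mem_stdSimplex_fG_eq_inv_alpha G i
  have hupper : fG G x ≤ (alpha G : ℝ)⁻¹ := hfz ▸ hxmin z hz
  have hxij : 0 < x i * x j := mul_pos ((hx.1 i).lt_of_ne' hxi) ((hx.1 j).lt_of_ne' hxj)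
  linarith [fG_eq_fG_deleteEdges_add G hadj x]
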